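/- Consider the system on X = ℝ² given by A(n)(x₁,x₂) = (c₁ a_n x₁, c₂ a_n x₂) with c₁ = e^{−3/2}, c₂ = e^{1/2}, where a_n = e^{−n} if n is even and a_n = e^{n+1} if n is odd, with projections P(n)(x₁,x₂) = (x₁,0). Then the system is not P-strongly exponentially dichotomic: there do not exist constants N ≥ 1, α > 0 and β with 0 ≤ β < α such that e^{α(m−n)}(‖𝒜_P(m,n)x‖ + ‖Q(n)x‖) ≤ N(e^{βn}‖P(n)x‖ + e^{βm}‖𝒜_Q(m,n)x‖) for all m ≥ n and all x ∈ ℝ². -/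
import Mathlib


open Real

/-- The evolution operator started at time `n`, after `k` steps:
`A(n+k) ⋯ A(n+1)`. -/
noncomputable def evolFrom {X : Type*} [NormedAddCommGroup X] [NormedSpace ℝ X]
    (A : ℕ → X →L[ℝ] X) (n : ℕ) : ℕ → X →L[ℝ] X
  | 0 => 1
  | k + 1 => (A (n + k + 1)).comp (evolFrom A n k)

/-- The evolution operator `𝒜(m,n) = A(m) ⋯ A(n+1)` for `m ≥ n`, `𝒜(n,n) = I`. -/
noncomputable def evol {X : Type*} [NormedAddCommGroup X] [NormedSpace ℝ X]
    (A : ℕ → X →L[ℝ] X) (m n : ℕ) : X →L[ℝ] X :=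
  evolFrom A n (m - n)

/-- `𝒜_P(m,n) = 𝒜(m,n) P(n)`. -/
noncomputable def evolP {X : Type*} [NormedAddCommGroup X] [NormedSpace ℝ X]
    (A P : ℕ → X →L[ℝ] X) (m n : ℕ) : X →L[ℝ] X :=
  (evol A m n).comp (P n)

/-- `𝒜_Q(m,n) = 𝒜(m,n) Q(n)` where `Q(n) = I - P(n)`. -/
noncomputable def evolQ {X : Type*} [NormedAddCommGroup X] [NormedSpace ℝ X]
    (A P : ℕ → X →L[ℝ] X) (m n : ℕ) : X →L[ℝ] X :=
  (evol A m n).comp (1 - P n)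

/-- The system is P-strongly exponentially dichotomic. -/
def IsSED {X : Type*} [NormedAddCommGroup X] [NormedSpace ℝ X]
    (A P : ℕ → X →L[ℝ] X) : Prop :=
  ∃ N α β : ℝ, 1 ≤ N ∧ 0 < α ∧ 0 ≤ β ∧ β < α ∧
    ∀ m n : ℕ, n ≤ m → ∀ x : X,
      exp (α * ((m : ℝ) - n)) * (‖evolP A P m n x‖ + ‖(1 - P n) x‖) ≤
        N * (exp (β * n) * ‖P n x‖ + exp (β * m) * ‖evolQ A P m n x‖)

/-- The diagonal operator `(x₁, x₂) ↦ (u x₁, v x₂)` on `ℝ²`. -/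
noncomputable def diagCLM (u v : ℝ) : ℝ × ℝ →L[ℝ] ℝ × ℝ :=
  (u • ContinuousLinearMap.fst ℝ ℝ ℝ).prod (v • ContinuousLinearMap.snd ℝ ℝ ℝ)

/-- The family of projections `P(n)(x₁, x₂) = (x₁, 0)` on `ℝ²`. -/
noncomputable def projFst : ℕ → (ℝ × ℝ →L[ℝ] ℝ × ℝ) :=
  fun _ => (ContinuousLinearMap.fst ℝ ℝ ℝ).prod 0

lemma diagCLM_apply' (u v : ℝ) (x : ℝ × ℝ) : diagCLM u v x = (u * x.1, v * x.2) := rfl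

lemma projFst_apply' (n : ℕ) (x : ℝ × ℝ) : projFst n x = (x.1, 0) := rfl

/-- Example: with `c₁ = e^{-3/2}`, `c₂ = e^{1/2}`, the system is not
P-strongly exponentially dichotomic. -/
theorem example_not_strong_exponential_dichotomy
    (a : ℕ → ℝ)
    (ha : ∀ n, a n = if Even n then exp (-(n : ℝ)) else exp ((n : ℝ) + 1))
    (A : ℕ → ℝ × ℝ →L[ℝ] ℝ × ℝ)
    (hA : ∀ n, A n = diagCLM (exp (-(3 / 2)) * a n) (exp (1 / 2) * a n)) :
    ¬ IsSED A projFst := by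
  rintro ⟨N, α, β, hN, hα, hβ0, hβα, h⟩
  have hN0 : (0:ℝ) < N := by linarith
  have hlogN : 0 ≤ Real.log N := Real.log_nonneg hN
  by_cases hhalf : 1/2 < α
  · -- Case α > 1/2 : use x = (1,0), n = 0, m odd large.
    have key : ∀ k : ℕ, evolFrom A 0 k ((1:ℝ), (0:ℝ)) =
        (exp (-(3/2)*k + if Even k then 0 else (k:ℝ)+1), 0) := by
      intro k
      induction k with
      | zero => simp [evolFrom]
      | succ k ih =>
        show (A (0 + k + 1)) (evolFrom A 0 k (1, 0)) = _
        rw [ih, hA, diagCLM_apply', ha]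
        rcases Nat.even_or_odd k with hk | hk
        · have h1 : ¬ Even (0 + k + 1) := by simp [Nat.even_add_one, hk]
          have h2 : ¬ Even (k + 1) := by simp [Nat.even_add_one, hk]
          simp only [if_neg h1, if_neg h2, if_pos hk]
          rw [Prod.mk.injEq]
          constructor
          · rw [← exp_add, ← exp_add]
            push_cast
            ring_nf
          · ring
        · have h1 : Even (0 + k + 1) := by
            simpa [Nat.even_add_one] using Nat.not_even_iff_odd.mpr hk
          have h2 : Even (k + 1) := by simpa [Nat.even_add_one] using Nat.not_even_iff_odd.mpr hk
          have h3 : ¬ Even k := Nat.not_even_iff_odd.mpr hk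
          simp only [if_pos h1, if_pos h2, if_neg h3]
          rw [Prod.mk.injEq]
          constructor
          · rw [← exp_add, ← exp_add]
            push_cast
            ring_nf
          · ring
    -- specialize to m odd
    have key2 : ∀ m : ℕ, ¬ Even m → exp ((α - 1/2) * m + 1) ≤ N := by
      intro m hm
      have hineq := h m 0 (Nat.zero_le m) ((1:ℝ), (0:ℝ))
      have hP : projFst 0 ((1:ℝ), (0:ℝ)) = ((1:ℝ), (0:ℝ)) := rfl
      have hQ : (1 - projFst 0) ((1:ℝ), (0:ℝ)) = 0 := by
        simp [ContinuousLinearMap.sub_apply, projFst_apply']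
      have hevol : evol A m 0 = evolFrom A 0 m := by simp [evol]
      have hEP : evolP A projFst m 0 ((1:ℝ), (0:ℝ)) =
          (exp (-(3/2)*m + ((m:ℝ)+1)), 0) := by
        show (evol A m 0) (projFst 0 (1, 0)) = _
        rw [hP, hevol, key m, if_neg hm]
      have hEQ : evolQ A projFst m 0 ((1:ℝ), (0:ℝ)) = 0 := by
        show (evol A m 0) ((1 - projFst 0) (1, 0)) = _
        rw [hQ, map_zero]
      rw [hEP, hEQ, hP, hQ] at hineq
      simp only [Prod.norm_def, norm_zero, norm_one, Nat.cast_zero, sub_zero,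
        Real.norm_eq_abs, abs_exp, max_eq_left (le_of_lt (exp_pos _)),
        add_zero, mul_zero, mul_one] at hineq
      calc exp ((α - 1/2) * m + 1)
          = exp (α * m) * (exp (-(3/2)*m + ((m:ℝ)+1)) + 0) := by
            rw [add_zero, ← exp_add]; ring_nf
        _ ≤ N * (exp (β * 0) * 1 + exp (β * m) * 0) := by
            convert hineq using 2 <;> simp
        _ = N := by simp
    obtain ⟨n₀, hn₀⟩ := exists_nat_gt (Real.log N / (α - 1/2))
    have hm : ¬ Even (2*n₀ + 1) := by simp [Nat.even_add_one, parity_simps]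
    have h1 := key2 (2*n₀+1) hm
    rw [← Real.exp_log hN0] at h1
    have h2 := Real.exp_le_exp.mp h1
    have h3 : Real.log N < (α - 1/2) * n₀ := by
      rw [div_lt_iff₀ (by linarith)] at hn₀; linarith [hn₀]
    have h4 : (α - 1/2) * n₀ ≤ (α - 1/2) * ((2*n₀+1 : ℕ) : ℝ) := by
      apply mul_le_mul_of_nonneg_left _ (by linarith)
      push_cast; linarith [Nat.cast_nonneg (α := ℝ) n₀]
    linarith
  · -- Case α ≤ 1/2 : use x = (0,1), n odd, m = n+1.
    push_neg at hhalf
    have key2 : ∀ k : ℕ, exp α ≤ N * exp ((β - 1) * ((2*k+2 : ℕ) : ℝ) + 1/2) := by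
      intro k
      set n := 2*k+1 with hn
      have hineq := h (n+1) n (Nat.le_succ n) ((0:ℝ), (1:ℝ))
      have hP : projFst n ((0:ℝ), (1:ℝ)) = 0 := by
        simp [projFst_apply', Prod.ext_iff]
      have hQ : (1 - projFst n) ((0:ℝ), (1:ℝ)) = ((0:ℝ), (1:ℝ)) := by
        simp [ContinuousLinearMap.sub_apply, projFst_apply', Prod.ext_iff]
      have hevol : evol A (n+1) n = A (n+1) := by
        have : n + 1 - n = 1 := by omega
        rw [evol, this]
        show (A (n + 0 + 1)).comp (evolFrom A n 0) = A (n+1)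
        show (A (n + 0 + 1)).comp 1 = A (n+1)
        rw [ContinuousLinearMap.one_def, ContinuousLinearMap.comp_id]
      have heven : Even (n+1) := ⟨k+1, by omega⟩
      have hEQ : evolQ A projFst (n+1) n ((0:ℝ), (1:ℝ)) =
          (0, exp ((1:ℝ)/2 - ((n:ℝ)+1))) := by
        show (evol A (n+1) n) ((1 - projFst n) (0, 1)) = _
        rw [hQ, hevol, hA, diagCLM_apply', ha, if_pos heven]
        rw [Prod.mk.injEq]
        constructor
        · ring
        · rw [mul_one, ← exp_add]; push_cast; ring_nf
      have hEP : evolP A projFst (n+1) n ((0:ℝ), (1:ℝ)) = 0 := by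
        show (evol A (n+1) n) (projFst n (0, 1)) = _
        rw [hP, map_zero]
      rw [hEP, hEQ, hP, hQ] at hineq
      simp only [Prod.norm_def, norm_zero, norm_one, Real.norm_eq_abs, abs_exp,
        max_eq_right (le_of_lt (exp_pos _)), max_eq_right (zero_le_one),
        mul_zero, zero_add] at hineq
      calc exp α = exp (α * (((n+1 : ℕ):ℝ) - (n:ℕ))) * 1 := by
            rw [mul_one]; congr 1; push_cast; ring
        _ ≤ N * (exp (β * ((n+1:ℕ):ℝ)) * exp ((1:ℝ)/2 - ((n:ℝ)+1))) := hineq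
        _ = N * exp ((β - 1) * ((2*k+2 : ℕ) : ℝ) + 1/2) := by
            rw [← exp_add]; congr 2; push_cast [hn]; ring
    obtain ⟨n₀, hn₀⟩ := exists_nat_gt (2 * Real.log N + 1)
    have h1 := key2 n₀
    rw [← Real.exp_log hN0, ← Real.exp_add] at h1
    have h2 := Real.exp_le_exp.mp h1
    set m : ℝ := ((2*n₀+2 : ℕ) : ℝ) with hm
    have hm0 : (0:ℝ) ≤ m := Nat.cast_nonneg _
    have hmn : (n₀ : ℝ) ≤ m := by rw [hm]; push_cast; linarith [Nat.cast_nonneg (α := ℝ) n₀]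
    have hstep : (β - 1) * m ≤ -(1/2) * m :=
      mul_le_mul_of_nonneg_right (by linarith) hm0
    linarith
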